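/- Let d ≥ 1, let X be a random vector distributed according to the standard d-variate normal distribution N_d(0, I_d), and let s, t ∈ ℝ^d. Then the matrix expectation E[ X Xᵀ CS⁺(s,X) CS⁺(t,X) ] = ( I_d − (s−t)(s−t)ᵀ ) ψ(s−t). -/

import Mathlib

/-!
With `G_u(x) = exp (-‖x‖²/2 + i⟪u, x⟫)`, the directional derivative is
`∂_v G_u = (i⟪u, v⟫ - ⟪v, x⟫) G_u`, so Gaussian integration by parts (Stein's identity) gives
`∫ ⟪v, x⟫ G_u = i⟪u, v⟫ ∫ G_u` and `∫ ⟪a, x⟫⟪v, x⟫ G_u = (⟪a, v⟫ - ⟪u, a⟫⟪u, v⟫) ∫ G_u`.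
Hence `E[X_k X_l exp (i⟪u, X⟫)] = (δ_kl - u_k u_l) ψ(u)` is real: its real part is the cosine
moment and its imaginary part, the sine moment, vanishes. The theorem follows from
`CS⁺(s,x) CS⁺(t,x) = cos ⟪s - t, x⟫ + sin ⟪s + t, x⟫`.
-/

open MeasureTheory Real

/-- The standard `d`-variate normal distribution `N_d(0, I_d)`, given by its Lebesgue
density `(2π)^{-d/2} exp(-‖x‖²/2)`. -/
noncomputable def stdGaussian (d : ℕ) : Measure (EuclideanSpace ℝ (Fin d)) :=
  volume.withDensity fun x => ENNReal.ofReal ((2 * π) ^ (-(d : ℝ) / 2) * Real.exp (-‖x‖ ^ 2 / 2))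

/-- The characteristic function of the standard `d`-variate normal distribution. -/
noncomputable def stdNormalCF {d : ℕ} (t : EuclideanSpace ℝ (Fin d)) : ℝ :=
  Real.exp (-‖t‖ ^ 2 / 2)

/-- `CS⁺(t,x) = cos(tᵀx) + sin(tᵀx)`. -/
noncomputable def CSplus {d : ℕ} (t x : EuclideanSpace ℝ (Fin d)) : ℝ :=
  Real.cos (inner ℝ t x : ℝ) + Real.sin (inner ℝ t x : ℝ)

open Complex GaussianFourier
open scoped RealInnerProductSpace

section GaussianWave

variable {V : Type*} [NormedAddCommGroup V] [InnerProductSpace ℝ V]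

noncomputable def gaussianWave (u x : V) : ℂ :=
  cexp (-(1 / 2) * (‖x‖ : ℂ) ^ 2 + I * ⟪u, x⟫)

theorem norm_gaussianWave (u x : V) : ‖gaussianWave u x‖ = rexp (-‖x‖ ^ 2 / 2) := by
  rw [gaussianWave, Complex.norm_exp]
  congr 1
  simp only [add_re, mul_re, I_re, I_im, ofReal_re, ofReal_im]
  norm_cast
  simp only [neg_re, div_ofNat_re, one_re]
  ring

theorem hasLineDerivAt_gaussianWave (u x v : V) :
    HasLineDerivAt ℝ (gaussianWave u) ((I * ⟪u, v⟫ - ⟪v, x⟫) * gaussianWave u x) x v := by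
  have hexp :=
    ((ofRealCLM.hasFDerivAt.comp x (hasFDerivAt_id x).norm_sq).const_mul (-(1 / 2) : ℂ)).add
      ((ofRealCLM.hasFDerivAt.comp x (innerSL ℝ u).hasFDerivAt).const_mul I) |>.cexp
  convert hexp.hasLineDerivAt v using 1
  · ext y; simp [gaussianWave]
  · simp only [gaussianWave, add_apply, smul_apply, Pi.add_apply,
      ContinuousLinearMap.comp_smul, nsmul_eq_mul, Nat.cast_ofNat,
      ContinuousLinearMap.comp_apply, ofRealCLM_apply, coe_innerSL_apply, id_eq, smul_eq_mul,
      ContinuousLinearMap.id_apply, Function.comp_apply]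
    push_cast
    rw [real_inner_comm x v]
    ring

theorem continuous_gaussianWave (u : V) : Continuous (gaussianWave u) := by
  unfold gaussianWave; fun_prop

variable [FiniteDimensional ℝ V] [MeasurableSpace V] [BorelSpace V]

theorem integral_gaussianWave (u : V) :
    ∫ x, gaussianWave u x
      = (((2 * π) ^ (Module.finrank ℝ V / 2 : ℝ) * rexp (-‖u‖ ^ 2 / 2) : ℝ) : ℂ) := by
  unfold gaussianWave
  rw [integral_cexp_neg_mul_sq_norm_add (by norm_num) I u]
  push_cast
  rw [ofReal_cpow (by positivity)]
  push_cast
  congr 2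
  · field_simp
  · rw [I_sq]; ring

theorem integrable_one_add_sq_norm_mul_exp :
    Integrable fun x : V => (1 + ‖x‖ ^ 2) * rexp (-‖x‖ ^ 2 / 2) := by
  have hexp : Integrable fun x : V => rexp (-(1 / 4) * ‖x‖ ^ 2) := by
    have hc := integrable_cexp_neg_mul_sq_norm_add (V := V) (b := ((1 / 4 : ℝ) : ℂ))
      (by norm_num) 0 0
    refine hc.norm.congr (Filter.Eventually.of_forall fun x => ?_)
    simp only [zero_mul, add_zero, norm_exp]
    norm_cast
  refine (hexp.const_mul 4).mono' (by fun_prop) (Filter.Eventually.of_forall fun x => ?_)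
  have hle := Real.add_one_le_exp (‖x‖ ^ 2 / 4)
  rw [Real.norm_eq_abs, abs_of_nonneg (by positivity)]
  calc (1 + ‖x‖ ^ 2) * rexp (-‖x‖ ^ 2 / 2)
      ≤ 4 * rexp (‖x‖ ^ 2 / 4) * rexp (-‖x‖ ^ 2 / 2) := by gcongr; linarith
    _ = 4 * rexp (-(1 / 4) * ‖x‖ ^ 2) := by rw [mul_assoc, ← Real.exp_add]; ring_nf

theorem integrable_gaussianWave (u : V) : Integrable (gaussianWave u) :=
  integrable_cexp_neg_mul_sq_norm_add (by norm_num) I u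

theorem integrable_mul_gaussianWave (u : V) {p : V → ℂ} (hp : Continuous p) (C : ℝ)
    (hpC : ∀ x, ‖p x‖ ≤ C * (1 + ‖x‖ ^ 2)) :
    Integrable fun x => p x * gaussianWave u x := by
  refine (integrable_one_add_sq_norm_mul_exp.const_mul C).mono'
    (hp.mul (continuous_gaussianWave u)).aestronglyMeasurable
    (Filter.Eventually.of_forall fun x => ?_)
  rw [norm_mul, norm_gaussianWave, ← mul_assoc]
  exact mul_le_mul_of_nonneg_right (hpC x) (Real.exp_pos _).le

theorem integrable_inner_mul_gaussianWave (u a : V) :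
    Integrable fun x => (⟪a, x⟫ : ℂ) * gaussianWave u x := by
  refine integrable_mul_gaussianWave u (by fun_prop) ‖a‖ fun x => ?_
  rw [norm_real, Real.norm_eq_abs]
  calc |⟪a, x⟫| ≤ ‖a‖ * ‖x‖ := abs_real_inner_le_norm a x
    _ ≤ ‖a‖ * (1 + ‖x‖ ^ 2) := by gcongr; nlinarith [sq_nonneg (‖x‖ - 1)]

theorem integrable_inner_mul_inner_mul_gaussianWave (u a b : V) :
    Integrable fun x => (⟪a, x⟫ : ℂ) * ⟪b, x⟫ * gaussianWave u x := by
  refine integrable_mul_gaussianWave u (by fun_prop) (‖a‖ * ‖b‖) fun x => ?_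
  rw [norm_mul, norm_real, norm_real, Real.norm_eq_abs, Real.norm_eq_abs]
  calc |⟪a, x⟫| * |⟪b, x⟫| ≤ (‖a‖ * ‖x‖) * (‖b‖ * ‖x‖) := by
        gcongr <;> exact abs_real_inner_le_norm _ x
    _ ≤ ‖a‖ * ‖b‖ * (1 + ‖x‖ ^ 2) := by
        nlinarith [mul_nonneg (norm_nonneg a) (norm_nonneg b)]

theorem integral_mul_inner_mul_gaussianWave {f f' : V → ℂ} {u v : V}
    (hf : ∀ x, HasLineDerivAt ℝ f (f' x) x v)
    (hfG : Integrable fun x => f x * gaussianWave u x)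
    (hf'G : Integrable fun x => f' x * gaussianWave u x)
    (hfvG : Integrable fun x => f x * ⟪v, x⟫ * gaussianWave u x) :
    ∫ x, f x * ⟪v, x⟫ * gaussianWave u x
      = I * ⟪u, v⟫ * (∫ x, f x * gaussianWave u x) + ∫ x, f' x * gaussianWave u x := by
  have hsplit : (fun x => f x * ((I * ⟪u, v⟫ - ⟪v, x⟫) * gaussianWave u x))
      = fun x => I * ⟪u, v⟫ * (f x * gaussianWave u x)
          - f x * ⟪v, x⟫ * gaussianWave u x := by
    ext x; ring
  have hfG' : Integrable fun x => f x * ((I * ⟪u, v⟫ - ⟪v, x⟫) * gaussianWave u x) := by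
    rw [hsplit]; exact (hfG.const_mul _).sub hfvG
  have ibp := integral_bilinear_hasLineDerivAt_right_eq_neg_left_of_integrable
    (B := ContinuousLinearMap.mul ℝ ℂ) hf'G hfG' hfG (fun x _ => hf x)
    (fun x _ => hasLineDerivAt_gaussianWave u x v)
  simp only [ContinuousLinearMap.mul_apply'] at ibp
  rw [hsplit, integral_sub (hfG.const_mul _) hfvG, integral_const_mul] at ibp
  linear_combination -ibp

theorem integral_inner_mul_gaussianWave (u v : V) :
    ∫ x, (⟪v, x⟫ : ℂ) * gaussianWave u x = I * ⟪u, v⟫ * ∫ x, gaussianWave u x := by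
  simpa using integral_mul_inner_mul_gaussianWave (f := fun _ => 1) (f' := fun _ => 0) (u := u)
    (fun x => by simpa using (hasFDerivAt_const (1 : ℂ) x).hasLineDerivAt v)
    (by simpa using integrable_gaussianWave u) (by simp)
    (by simpa using integrable_inner_mul_gaussianWave u v)

theorem integral_inner_mul_inner_mul_gaussianWave (u a v : V) :
    ∫ x, (⟪a, x⟫ : ℂ) * ⟪v, x⟫ * gaussianWave u x
      = (⟪a, v⟫ - ⟪u, a⟫ * ⟪u, v⟫) * ∫ x, gaussianWave u x := by
  have hf (x : V) : HasLineDerivAt ℝ (fun y => (⟪a, y⟫ : ℂ)) ⟪a, v⟫ x v :=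
    (ofRealCLM.comp (innerSL ℝ a)).hasFDerivAt.hasLineDerivAt v
  rw [integral_mul_inner_mul_gaussianWave hf (integrable_inner_mul_gaussianWave u a)
    ((integrable_gaussianWave u).const_mul _) (integrable_inner_mul_inner_mul_gaussianWave u a v),
    integral_inner_mul_gaussianWave, integral_const_mul]
  linear_combination (⟪u, v⟫ * ⟪u, a⟫ * ∫ x, gaussianWave u x) * I_sq

end GaussianWave

section StdGaussian

variable {d : ℕ}

noncomputable def stdGaussianPDF (d : ℕ) (x : EuclideanSpace ℝ (Fin d)) : ℝ :=
  (2 * π) ^ (-(d : ℝ) / 2) * rexp (-‖x‖ ^ 2 / 2)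

theorem stdGaussian_eq_withDensity :
    stdGaussian d = volume.withDensity fun x => ENNReal.ofReal (stdGaussianPDF d x) := rfl

theorem stdGaussianPDF_nonneg (x : EuclideanSpace ℝ (Fin d)) : 0 ≤ stdGaussianPDF d x := by
  unfold stdGaussianPDF; positivity

theorem measurable_stdGaussianPDF : Measurable (stdGaussianPDF d) := by
  unfold stdGaussianPDF; fun_prop

theorem integral_stdGaussian {E : Type*} [NormedAddCommGroup E] [NormedSpace ℝ E]
    (F : EuclideanSpace ℝ (Fin d) → E) :
    ∫ x, F x ∂stdGaussian d = ∫ x, stdGaussianPDF d x • F x := by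
  rw [stdGaussian_eq_withDensity, integral_withDensity_eq_integral_toReal_smul
    measurable_stdGaussianPDF.ennreal_ofReal (ae_of_all _ fun _ => ENNReal.ofReal_lt_top)]
  congr 1 with x
  rw [ENNReal.toReal_ofReal (stdGaussianPDF_nonneg x)]

theorem integrable_stdGaussian_iff {E : Type*} [NormedAddCommGroup E] [NormedSpace ℝ E]
    (F : EuclideanSpace ℝ (Fin d) → E) :
    Integrable F (stdGaussian d) ↔ Integrable fun x => stdGaussianPDF d x • F x := by
  rw [stdGaussian_eq_withDensity, integrable_withDensity_iff_integrable_smul'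
    measurable_stdGaussianPDF.ennreal_ofReal (ae_of_all _ fun _ => ENNReal.ofReal_lt_top)]
  congr! 3 with x
  rw [ENNReal.toReal_ofReal (stdGaussianPDF_nonneg x)]

theorem stdGaussianPDF_smul_coord_mul_coord_mul_cexp (u x : EuclideanSpace ℝ (Fin d))
    (k l : Fin d) :
    stdGaussianPDF d x • (((x k * x l : ℝ) : ℂ) * cexp (⟪u, x⟫ * I))
      = ((2 * π) ^ (-(d : ℝ) / 2) : ℝ) * ((⟪EuclideanSpace.single k 1, x⟫ : ℂ)
          * ⟪EuclideanSpace.single l 1, x⟫ * gaussianWave u x) := by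
  simp only [stdGaussianPDF, EuclideanSpace.inner_single_left, map_one, one_mul, gaussianWave,
    Complex.real_smul]
  push_cast
  rw [mul_comm I, Complex.exp_add]
  ring_nf

theorem integrable_stdGaussian_coord_mul_coord_mul_cexp (u : EuclideanSpace ℝ (Fin d))
    (k l : Fin d) :
    Integrable (fun x : EuclideanSpace ℝ (Fin d) =>
      ((x k * x l : ℝ) : ℂ) * cexp (⟪u, x⟫ * I)) (stdGaussian d) := by
  rw [integrable_stdGaussian_iff]
  simp_rw [stdGaussianPDF_smul_coord_mul_coord_mul_cexp]
  exact (integrable_inner_mul_inner_mul_gaussianWave u _ _).const_mul _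

theorem integral_stdGaussian_coord_mul_coord_mul_cexp (u : EuclideanSpace ℝ (Fin d))
    (k l : Fin d) :
    ∫ x, ((x k * x l : ℝ) : ℂ) * cexp (⟪u, x⟫ * I) ∂stdGaussian d
      = (((if k = l then 1 else 0) - u k * u l) * stdNormalCF u : ℝ) := by
  have hpow : (2 * π) ^ (-(d : ℝ) / 2) * (2 * π) ^ (d / 2 : ℝ) = 1 := by
    rw [neg_div, Real.rpow_neg (by positivity), inv_mul_cancel₀ (by positivity)]
  simp_rw [integral_stdGaussian, stdGaussianPDF_smul_coord_mul_coord_mul_cexp]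
  rw [integral_const_mul, integral_inner_mul_inner_mul_gaussianWave, integral_gaussianWave,
    finrank_euclideanSpace_fin]
  simp only [EuclideanSpace.inner_single_right, PiLp.single_apply, one_mul, conj_trivial,
    stdNormalCF, @eq_comm _ l k]
  simp only [← ofReal_mul, ← ofReal_sub, ofReal_inj]
  linear_combination (((if k = l then 1 else 0) - u k * u l) * rexp (-‖u‖ ^ 2 / 2)) * hpow

theorem integrable_stdGaussian_coord_mul_coord_mul_cos (u : EuclideanSpace ℝ (Fin d))
    (k l : Fin d) :
    Integrable (fun x : EuclideanSpace ℝ (Fin d) => x k * x l * Real.cos ⟪u, x⟫)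
      (stdGaussian d) := by
  simpa only [RCLike.re_to_complex, re_ofReal_mul, exp_ofReal_mul_I_re] using
    (integrable_stdGaussian_coord_mul_coord_mul_cexp u k l).re

theorem integrable_stdGaussian_coord_mul_coord_mul_sin (u : EuclideanSpace ℝ (Fin d))
    (k l : Fin d) :
    Integrable (fun x : EuclideanSpace ℝ (Fin d) => x k * x l * Real.sin ⟪u, x⟫)
      (stdGaussian d) := by
  simpa only [RCLike.im_to_complex, im_ofReal_mul, exp_ofReal_mul_I_im] using
    (integrable_stdGaussian_coord_mul_coord_mul_cexp u k l).im

theorem integral_stdGaussian_coord_mul_coord_mul_cos (u : EuclideanSpace ℝ (Fin d))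
    (k l : Fin d) :
    ∫ x, x k * x l * Real.cos ⟪u, x⟫ ∂stdGaussian d
      = ((if k = l then 1 else 0) - u k * u l) * stdNormalCF u := by
  simpa only [RCLike.re_to_complex, re_ofReal_mul, exp_ofReal_mul_I_re, ofReal_re,
    integral_stdGaussian_coord_mul_coord_mul_cexp] using
    integral_re (integrable_stdGaussian_coord_mul_coord_mul_cexp u k l)

theorem integral_stdGaussian_coord_mul_coord_mul_sin (u : EuclideanSpace ℝ (Fin d))
    (k l : Fin d) :
    ∫ x, x k * x l * Real.sin ⟪u, x⟫ ∂stdGaussian d = 0 := by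
  simpa only [RCLike.im_to_complex, im_ofReal_mul, exp_ofReal_mul_I_im, ofReal_im,
    integral_stdGaussian_coord_mul_coord_mul_cexp] using
    integral_im (integrable_stdGaussian_coord_mul_coord_mul_cexp u k l)

end StdGaussian

theorem CSplus_mul_CSplus {d : ℕ} (s t x : EuclideanSpace ℝ (Fin d)) :
    CSplus s x * CSplus t x = Real.cos ⟪s - t, x⟫ + Real.sin ⟪s + t, x⟫ := by
  rw [CSplus, CSplus, inner_sub_left, inner_add_left, Real.cos_sub, Real.sin_add]
  ring

theorem stdGaussian_matrix_CSplus_CSplus_expectation_general (d : ℕ)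
    (s t : EuclideanSpace ℝ (Fin d)) (k l : Fin d) :
    ∫ x, x k * x l * (CSplus s x * CSplus t x) ∂(stdGaussian d)
      = ((if k = l then (1 : ℝ) else 0) - (s - t) k * (s - t) l) * stdNormalCF (s - t) := by
  simp_rw [CSplus_mul_CSplus, mul_add]
  rw [integral_add (integrable_stdGaussian_coord_mul_coord_mul_cos _ k l)
      (integrable_stdGaussian_coord_mul_coord_mul_sin _ k l),
    integral_stdGaussian_coord_mul_coord_mul_cos, integral_stdGaussian_coord_mul_coord_mul_sin,
    add_zero]

/-- For `X ~ N_d(0, I_d)`, entrywise: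
`E[X Xᵀ CS⁺(s,X) CS⁺(t,X)] = (I_d - (s-t)(s-t)ᵀ) ψ(s-t)`. -/
theorem stdGaussian_matrix_CSplus_CSplus_expectation (d : ℕ) (hd : 1 ≤ d)
    (s t : EuclideanSpace ℝ (Fin d)) (k l : Fin d) :
    ∫ x, x k * x l * (CSplus s x * CSplus t x) ∂(stdGaussian d)
      = ((if k = l then (1 : ℝ) else 0) - (s - t) k * (s - t) l) * stdNormalCF (s - t) :=
  stdGaussian_matrix_CSplus_CSplus_expectation_general d s t k l
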